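/- arXiv:math/0506357 — 4 statements merged into one kernel-verified Lean document; each statement's English description precedes it below -/
import Mathlib

section
/- Let {f_i}_{i∈I} be a frame for a Hilbert space H with frame operator S and canonical dual frame {f̃_i}_{i∈I}, where f̃_i = S⁻¹f_i. Then for every subset J ⊆ I and every f ∈ H: ∑_{i∈J} |⟨f, f_i⟩|² − ∑_{i∈I} |⟨S_J f, f̃_i⟩|² = ∑_{i∈J^c} |⟨f, f_i⟩|² − ∑_{i∈I} |⟨S_{J^c} f, f̃_i⟩|², where J^c = I \ J. -/
/-!
Summing `⟪x, ⟪f i, x⟫ • f i⟫` over `J` gives `∑_{i∈J} |⟪f i, x⟫|² = re ⟪x, S_J x⟫`, and the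
symmetry of `S⁻¹` turns the dual sum into `∑_i |⟪S⁻¹ f i, y⟫|² = re ⟪S⁻¹ y, y⟫`. Since
`S_J x + S_{Jᶜ} x = S x`, both sides of the identity equal `re ⟪S⁻¹ S_J x, S_{Jᶜ} x⟫`.
-/

open scoped InnerProductSpace ComplexConjugate

section FrameIdentity

variable {𝕜 E ι : Type*} [RCLike 𝕜] [NormedAddCommGroup E] [InnerProductSpace 𝕜 E]

theorem hasSum_norm_inner_sq_of_hasSum_inner_smul {g : ι → E} {x y : E}
    (h : HasSum (fun i => ⟪g i, x⟫_𝕜 • g i) y) :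
    HasSum (fun i => ‖⟪g i, x⟫_𝕜‖ ^ 2) (RCLike.re ⟪x, y⟫_𝕜) := by
  have h' := RCLike.reCLM.hasSum ((innerSL 𝕜 x).hasSum h)
  refine h'.congr_fun fun i => ?_
  simp only [innerSL_apply_apply, RCLike.reCLM_apply, inner_smul_right, ← inner_conj_symm x (g i),
    RCLike.mul_conj, ← RCLike.ofReal_pow, RCLike.ofReal_re]

theorem isSymmetric_of_hasSum_inner_smul {g : ι → E} {T : E →ₗ[𝕜] E}
    (hT : ∀ x, HasSum (fun i => ⟪g i, x⟫_𝕜 • g i) (T x)) : T.IsSymmetric := by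
  intro a b
  have ha : HasSum (fun i => conj (⟪b, ⟪g i, a⟫_𝕜 • g i⟫_𝕜)) (conj ⟪b, T a⟫_𝕜) :=
    ((innerSL 𝕜 b).hasSum (hT a)).star
  have hb : HasSum (fun i => ⟪a, ⟪g i, b⟫_𝕜 • g i⟫_𝕜) ⟪a, T b⟫_𝕜 := (innerSL 𝕜 a).hasSum (hT b)
  rw [← inner_conj_symm]
  refine ha.unique (hb.congr_fun fun i => ?_)
  simp only [inner_smul_right, map_mul, inner_conj_symm, mul_comm]

theorem LinearMap.IsSymmetric.of_rightInverse {T P : E →ₗ[𝕜] E} (hT : T.IsSymmetric)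
    (hTP : ∀ a, T (P a) = a) : P.IsSymmetric := fun a b => by
  rw [← hTP b, ← hT, hTP, hTP]

theorem LinearMap.IsSymmetric.re_inner_sub_re_inner_map_self_eq {P : E →ₗ[𝕜] E}
    (hP : P.IsSymmetric) {x a b : E} (hab : P (a + b) = x) :
    RCLike.re ⟪x, a⟫_𝕜 - RCLike.re ⟪P a, a⟫_𝕜 = RCLike.re ⟪x, b⟫_𝕜 - RCLike.re ⟪P b, b⟫_𝕜 := by
  have hPba : RCLike.re ⟪P b, a⟫_𝕜 = RCLike.re ⟪P a, b⟫_𝕜 := by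
    rw [hP, inner_re_symm]
  subst hab
  simp only [map_add, inner_add_left]
  linarith

end FrameIdentity

theorem stmt_4_general {H : Type*} [NormedAddCommGroup H] [InnerProductSpace ℂ H]
    {ι : Type*} (f : ι → H)
    (S Sinv : H →L[ℂ] H) (hS : ∀ x : H, HasSum (fun i => ⟪f i, x⟫_ℂ • f i) (S x))
    (hinv₁ : S * Sinv = 1) (hinv₂ : Sinv * S = 1)
    (J : Set ι) (SJ SJc : H →L[ℂ] H)
    (hSJ : ∀ x : H, HasSum (fun i : J => ⟪f i, x⟫_ℂ • f i) (SJ x))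
    (hSJc : ∀ x : H, HasSum (fun i : ↥Jᶜ => ⟪f i, x⟫_ℂ • f i) (SJc x)) :
    ∀ x : H,
      (∑' i : J, ‖⟪f i, x⟫_ℂ‖ ^ 2) - ∑' i, ‖⟪Sinv (f i), SJ x⟫_ℂ‖ ^ 2 =
      (∑' i : ↥Jᶜ, ‖⟪f i, x⟫_ℂ‖ ^ 2) - ∑' i, ‖⟪Sinv (f i), SJc x⟫_ℂ‖ ^ 2 := by
  intro x
  have hSSinv (a : H) : S (Sinv a) = a := congr($hinv₁ a)
  have hSinvS (a : H) : Sinv (S a) = a := congr($hinv₂ a)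
  have hSinv : (Sinv : H →ₗ[ℂ] H).IsSymmetric :=
    (isSymmetric_of_hasSum_inner_smul (T := (S : H →ₗ[ℂ] H)) hS).of_rightInverse hSSinv
  have hdual (y : H) : ∑' i, ‖⟪Sinv (f i), y⟫_ℂ‖ ^ 2 = RCLike.re ⟪Sinv y, y⟫_ℂ := by
    simp_rw [hSinv.apply_clm _ y]
    rw [(hasSum_norm_inner_sq_of_hasSum_inner_smul (hS (Sinv y))).tsum_eq, hSSinv,
      inner_re_symm]
  have hsplit : Sinv (SJ x + SJc x) = x := by
    rw [← (hS x).unique ((hSJ x).add_compl (hSJc x)), hSinvS]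
  rw [(hasSum_norm_inner_sq_of_hasSum_inner_smul (hSJ x)).tsum_eq,
    (hasSum_norm_inner_sq_of_hasSum_inner_smul (hSJc x)).tsum_eq, hdual, hdual]
  exact hSinv.re_inner_sub_re_inner_map_self_eq hsplit

/-- Fundamental identity for general frames (Theorem TT): for a frame `{f_i}` with frame
operator `S`, canonical dual `f̃_i = S⁻¹ f_i`, and partial frame operators `S_J`, `S_{J^c}`:
`∑_{i∈J} |⟨x,f_i⟩|² − ∑_{i∈I} |⟨S_J x, f̃_i⟩|² = ∑_{i∈J^c} |⟨x,f_i⟩|² − ∑_{i∈I} |⟨S_{J^c} x, f̃_i⟩|²`. -/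
theorem stmt_4 {H : Type*} [NormedAddCommGroup H] [InnerProductSpace ℂ H] [CompleteSpace H]
    {ι : Type*} (f : ι → H) (A B : ℝ) (hA : 0 < A) (hAB : A ≤ B)
    (hframe : ∀ x : H, Summable (fun i => ‖⟪f i, x⟫_ℂ‖ ^ 2) ∧
      A * ‖x‖ ^ 2 ≤ ∑' i, ‖⟪f i, x⟫_ℂ‖ ^ 2 ∧ ∑' i, ‖⟪f i, x⟫_ℂ‖ ^ 2 ≤ B * ‖x‖ ^ 2)
    (S Sinv : H →L[ℂ] H) (hS : ∀ x : H, HasSum (fun i => ⟪f i, x⟫_ℂ • f i) (S x))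
    (hinv₁ : S * Sinv = 1) (hinv₂ : Sinv * S = 1)
    (J : Set ι) (SJ SJc : H →L[ℂ] H)
    (hSJ : ∀ x : H, HasSum (fun i : J => ⟪f i, x⟫_ℂ • f i) (SJ x))
    (hSJc : ∀ x : H, HasSum (fun i : ↥Jᶜ => ⟪f i, x⟫_ℂ • f i) (SJc x)) :
    ∀ x : H,
      (∑' i : J, ‖⟪f i, x⟫_ℂ‖ ^ 2) - ∑' i, ‖⟪Sinv (f i), SJ x⟫_ℂ‖ ^ 2 =
      (∑' i : ↥Jᶜ, ‖⟪f i, x⟫_ℂ‖ ^ 2) - ∑' i, ‖⟪Sinv (f i), SJc x⟫_ℂ‖ ^ 2 :=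
  stmt_4_general f S Sinv hS hinv₁ hinv₂ J SJ SJc hSJ hSJc
end

section
/- Let {f_i}_{i∈I} be a Parseval frame for a Hilbert space H. For every subset J ⊆ I, every E ⊆ J^c, and every f ∈ H: ‖∑_{i∈J∪E} ⟨f, f_i⟩ f_i‖² − ‖∑_{i∈J^c∖E} ⟨f, f_i⟩ f_i‖² = ‖∑_{i∈J} ⟨f, f_i⟩ f_i‖² − ‖∑_{i∈J^c} ⟨f, f_i⟩ f_i‖² + 2 ∑_{i∈E} |⟨f, f_i⟩|², where J^c = I \ J. -/
/-!
Write `S_K x = ∑_{i ∈ K} ⟪f i, x⟫ f i`. Testing the Parseval identity on a finite synthesis sum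
gives `‖∑ c_i f_i‖² ≤ ∑ |c_i|²`, so `S_K x` converges and `‖S_I x‖ ≤ ‖x‖`. Since also
`⟪x, S_K x⟫ = ∑_{i ∈ K} |⟪f i, x⟫|²`, we get `‖x - S_I x‖² = ‖S_I x‖² - ‖x‖² ≤ 0`, i.e. the frame
reconstructs `x` and `S_K x + S_{Kᶜ} x = x`. Hence
`‖S_K x‖² - ‖S_{Kᶜ} x‖² = re ⟪S_K x + S_{Kᶜ} x, S_K x - S_{Kᶜ} x⟫` is the difference of the
coefficient energies on `K` and on `Kᶜ`. Comparing this for `K = J ∪ E` and `K = J` moves the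
energy of `E` from one side to the other, which accounts for `2 ∑_{i ∈ E} |⟪f i, x⟫|²`.
-/

open scoped InnerProductSpace

section

variable {𝕜 H ι : Type*} [RCLike 𝕜] [NormedAddCommGroup H] [InnerProductSpace 𝕜 H]

def IsParsevalFrame (𝕜 : Type*) [RCLike 𝕜] [InnerProductSpace 𝕜 H] (f : ι → H) : Prop :=
  ∀ x : H, HasSum (fun i => ‖⟪f i, x⟫_𝕜‖ ^ 2) (‖x‖ ^ 2)

theorem re_inner_add_sub_eq_norm_sq_sub_norm_sq (a b : H) :
    RCLike.re ⟪a + b, a - b⟫_𝕜 = ‖a‖ ^ 2 - ‖b‖ ^ 2 := by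
  rw [inner_add_left, inner_sub_right, inner_sub_right, map_add, map_sub, map_sub,
    inner_self_eq_norm_sq, inner_self_eq_norm_sq, inner_re_symm b a]
  ring

theorem inner_tsum_inner_smul (f : ι → H) (x : H) (hs : Summable fun i => ⟪f i, x⟫_𝕜 • f i) :
    ⟪x, ∑' i, ⟪f i, x⟫_𝕜 • f i⟫_𝕜 = ((∑' i, ‖⟪f i, x⟫_𝕜‖ ^ 2 : ℝ) : 𝕜) := by
  calc ⟪x, ∑' i, ⟪f i, x⟫_𝕜 • f i⟫_𝕜 = ∑' i, ⟪x, ⟪f i, x⟫_𝕜 • f i⟫_𝕜 :=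
        (innerSL 𝕜 x).map_tsum hs
    _ = ∑' i, ((‖⟪f i, x⟫_𝕜‖ ^ 2 : ℝ) : 𝕜) := tsum_congr fun i => by
        rw [inner_smul_right, ← inner_conj_symm x (f i), mul_comm, RCLike.conj_mul,
          RCLike.ofReal_pow]
    _ = _ := (RCLike.ofReal_tsum 𝕜 _).symm

namespace IsParsevalFrame

variable {f : ι → H}

theorem norm_sum_smul_sq_le (hf : IsParsevalFrame 𝕜 f) (g : ι → 𝕜) (t : Finset ι) :
    ‖∑ i ∈ t, g i • f i‖ ^ 2 ≤ ∑ i ∈ t, ‖g i‖ ^ 2 := by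
  set v := ∑ i ∈ t, g i • f i
  have hv_le : ‖v‖ ^ 2 ≤ ∑ i ∈ t, ‖g i‖ * ‖⟪f i, v⟫_𝕜‖ := by
    have hvv : ⟪v, v⟫_𝕜 = ∑ i ∈ t, starRingEnd 𝕜 (g i) * ⟪f i, v⟫_𝕜 := by
      simp only [v, sum_inner, inner_smul_left]
    calc ‖v‖ ^ 2 = RCLike.re ⟪v, v⟫_𝕜 := (inner_self_eq_norm_sq v).symm
      _ ≤ ‖⟪v, v⟫_𝕜‖ := RCLike.re_le_norm _
      _ ≤ ∑ i ∈ t, ‖g i‖ * ‖⟪f i, v⟫_𝕜‖ := by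
        rw [hvv]
        refine (norm_sum_le _ _).trans_eq (Finset.sum_congr rfl fun i _ => ?_)
        rw [norm_mul, RCLike.norm_conj]
  have hcs : (∑ i ∈ t, ‖g i‖ * ‖⟪f i, v⟫_𝕜‖) ^ 2 ≤ (∑ i ∈ t, ‖g i‖ ^ 2) * ‖v‖ ^ 2 :=
    (Finset.sum_mul_sq_le_sq_mul_sq t _ _).trans <| mul_le_mul_of_nonneg_left
      (sum_le_hasSum t (fun i _ => sq_nonneg _) (hf v)) (Finset.sum_nonneg fun i _ => sq_nonneg _)
  nlinarith [sq_nonneg ‖v‖, Finset.sum_nonneg fun i (_ : i ∈ t) => sq_nonneg ‖g i‖]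

theorem summable_smul [CompleteSpace H] (hf : IsParsevalFrame 𝕜 f) {g : ι → 𝕜}
    (hg : Summable fun i => ‖g i‖ ^ 2) :
    Summable fun i => g i • f i := by
  refine summable_iff_vanishing_norm.2 fun ε hε => ?_
  obtain ⟨s, hs⟩ := summable_iff_vanishing_norm.1 hg (ε ^ 2) (by positivity)
  refine ⟨s, fun t ht => ?_⟩
  have hsq : ‖∑ i ∈ t, g i • f i‖ ^ 2 < ε ^ 2 :=
    (hf.norm_sum_smul_sq_le g t).trans_lt ((le_abs_self _).trans_lt (hs t ht))
  exact lt_of_pow_lt_pow_left₀ 2 hε.le hsq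

theorem summable_inner_smul [CompleteSpace H] (hf : IsParsevalFrame 𝕜 f) (x : H) :
    Summable fun i => ⟪f i, x⟫_𝕜 • f i :=
  hf.summable_smul (hf x).summable

theorem norm_tsum_inner_smul_le [CompleteSpace H] (hf : IsParsevalFrame 𝕜 f) (x : H) :
    ‖∑' i, ⟪f i, x⟫_𝕜 • f i‖ ≤ ‖x‖ := by
  refine le_of_tendsto' (hf.summable_inner_smul x).hasSum.norm fun t =>
    le_of_pow_le_pow_left₀ two_ne_zero (norm_nonneg x) ?_
  exact (hf.norm_sum_smul_sq_le _ t).trans (sum_le_hasSum t (fun i _ => sq_nonneg _) (hf x))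

theorem tsum_inner_smul [CompleteSpace H] (hf : IsParsevalFrame 𝕜 f) (x : H) :
    ∑' i, ⟪f i, x⟫_𝕜 • f i = x := by
  set s := ∑' i, ⟪f i, x⟫_𝕜 • f i
  have hxs : RCLike.re ⟪x, s⟫_𝕜 = ‖x‖ ^ 2 := by
    rw [inner_tsum_inner_smul f x (hf.summable_inner_smul x), RCLike.ofReal_re, (hf x).tsum_eq]
  have hs : ‖s‖ ≤ ‖x‖ := hf.norm_tsum_inner_smul_le x
  have hdist : ‖x - s‖ ^ 2 ≤ 0 := by
    rw [@norm_sub_sq 𝕜, hxs]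
    nlinarith [norm_nonneg s]
  exact (sub_eq_zero.1 (norm_eq_zero.1
    ((pow_eq_zero_iff two_ne_zero).1 (hdist.antisymm (sq_nonneg _))))).symm

theorem norm_sq_tsum_sub_norm_sq_tsum_compl [CompleteSpace H] (hf : IsParsevalFrame 𝕜 f)
    (x : H) (K : Set ι) :
    ‖∑' i : K, ⟪f i, x⟫_𝕜 • f i‖ ^ 2 - ‖∑' i : ↥Kᶜ, ⟪f i, x⟫_𝕜 • f i‖ ^ 2 =
      ∑' i : K, ‖⟪f i, x⟫_𝕜‖ ^ 2 - ∑' i : ↥Kᶜ, ‖⟪f i, x⟫_𝕜‖ ^ 2 := by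
  have hs := hf.summable_inner_smul x
  have hsplit : ∑' i : K, ⟪f i, x⟫_𝕜 • f i + ∑' i : ↥Kᶜ, ⟪f i, x⟫_𝕜 • f i = x :=
    ((hs.subtype K).tsum_add_tsum_compl (hs.subtype Kᶜ)).trans (hf.tsum_inner_smul x)
  have hre (L : Set ι) :
      RCLike.re ⟪x, ∑' i : L, ⟪f i, x⟫_𝕜 • f i⟫_𝕜 = ∑' i : L, ‖⟪f i, x⟫_𝕜‖ ^ 2 := by
    rw [inner_tsum_inner_smul (fun i : L => f i) x (hs.subtype L), RCLike.ofReal_re]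
  rw [← re_inner_add_sub_eq_norm_sq_sub_norm_sq (𝕜 := 𝕜), hsplit, inner_sub_right, map_sub,
    hre, hre]

end IsParsevalFrame

end

/-- Parseval Frame Identity for overlapping divisions: for a Parseval frame `{f_i}`,
`J ⊆ I`, `E ⊆ J^c` and any `x`:
`‖∑_{J∪E} ⟨x,f_i⟩f_i‖² − ‖∑_{J^c∖E} ⟨x,f_i⟩f_i‖²
  = ‖∑_J ⟨x,f_i⟩f_i‖² − ‖∑_{J^c} ⟨x,f_i⟩f_i‖² + 2∑_E |⟨x,f_i⟩|²`. -/
theorem stmt_6 {H : Type*} [NormedAddCommGroup H] [InnerProductSpace ℂ H] [CompleteSpace H]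
    {ι : Type*} (f : ι → H)
    (hP : ∀ x : H, HasSum (fun i => ‖⟪f i, x⟫_ℂ‖ ^ 2) (‖x‖ ^ 2))
    (J E : Set ι) (hE : E ⊆ Jᶜ) (x : H) :
    ‖∑' i : ↥(J ∪ E), ⟪f i, x⟫_ℂ • (f i : H)‖ ^ 2 -
      ‖∑' i : ↥(Jᶜ \ E), ⟪f i, x⟫_ℂ • (f i : H)‖ ^ 2 =
    ‖∑' i : J, ⟪f i, x⟫_ℂ • (f i : H)‖ ^ 2 -
      ‖∑' i : ↥Jᶜ, ⟪f i, x⟫_ℂ • (f i : H)‖ ^ 2 +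
      2 * ∑' i : E, ‖⟪f i, x⟫_ℂ‖ ^ 2 := by
  have hf : IsParsevalFrame ℂ f := hP
  have hc : Summable fun i => ‖⟪f i, x⟫_ℂ‖ ^ 2 := (hP x).summable
  have key_J := hf.norm_sq_tsum_sub_norm_sq_tsum_compl x J
  have key_JE := hf.norm_sq_tsum_sub_norm_sq_tsum_compl x (J ∪ E)
  rw [Set.compl_union, ← Set.sdiff_eq] at key_JE
  have split_JE : ∑' i : ↥(J ∪ E), ‖⟪f i, x⟫_ℂ‖ ^ 2 =
      ∑' i : J, ‖⟪f i, x⟫_ℂ‖ ^ 2 + ∑' i : E, ‖⟪f i, x⟫_ℂ‖ ^ 2 :=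
    (hc.subtype J).tsum_union_disjoint (Set.subset_compl_iff_disjoint_left.1 hE) (hc.subtype E)
  have split_Jc : ∑' i : ↥Jᶜ, ‖⟪f i, x⟫_ℂ‖ ^ 2 =
      ∑' i : ↥(Jᶜ \ E), ‖⟪f i, x⟫_ℂ‖ ^ 2 + ∑' i : E, ‖⟪f i, x⟫_ℂ‖ ^ 2 :=
    (tsum_congr_set_coe (fun i => ‖⟪f i, x⟫_ℂ‖ ^ 2) (Set.sdiff_union_of_subset hE).symm).trans
      ((hc.subtype _).tsum_union_disjoint disjoint_sdiff_self_left (hc.subtype E))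
  rw [key_JE, key_J, split_JE, split_Jc]
  ring
end

section
/- Let {f_i}_{i∈I} be a Parseval frame for a Hilbert space H, let J ⊆ I, and let S_J and S_{J^c} be the operators S_J f = ∑_{i∈J} ⟨f, f_i⟩ f_i and S_{J^c} f = ∑_{i∈I∖J} ⟨f, f_i⟩ f_i. Then as bounded operators on H, 2(S_J + S_{J^c}²) ≥ (3/2)·I, i.e., ⟨2(S_J + S_{J^c}²)f, f⟩ ≥ (3/2)‖f‖² for all f ∈ H. -/
open scoped InnerProductSpace

private lemma aux_inner_hasSum {H : Type*} [NormedAddCommGroup H] [InnerProductSpace ℂ H]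
    {κ : Type*} (g : κ → H) (S : H →L[ℂ] H)
    (hS : ∀ x : H, HasSum (fun i => ⟪g i, x⟫_ℂ • g i) (S x)) (x y : H) :
    HasSum (fun i => ⟪g i, y⟫_ℂ * ⟪x, g i⟫_ℂ) ⟪x, S y⟫_ℂ := by
  have := (hS y).mapL (innerSL ℂ x)
  simpa [inner_smul_right] using this

private lemma aux_symm {H : Type*} [NormedAddCommGroup H] [InnerProductSpace ℂ H]
    {κ : Type*} (g : κ → H) (S : H →L[ℂ] H)
    (hS : ∀ x : H, HasSum (fun i => ⟪g i, x⟫_ℂ • g i) (S x)) (x y : H) :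
    ⟪x, S y⟫_ℂ = ⟪S x, y⟫_ℂ := by
  have h1 := aux_inner_hasSum g S hS x y
  have h2 := (aux_inner_hasSum g S hS y x).star
  rw [show (star ⟪y, S x⟫_ℂ = ⟪S x, y⟫_ℂ) from inner_conj_symm _ _] at h2
  refine h1.unique ?_
  convert h2 using 2 with i
  simp only [star_mul', RCLike.star_def, inner_conj_symm]
  ring

private lemma aux_diag {H : Type*} [NormedAddCommGroup H] [InnerProductSpace ℂ H]
    {κ : Type*} (g : κ → H) (S : H →L[ℂ] H)
    (hS : ∀ x : H, HasSum (fun i => ⟪g i, x⟫_ℂ • g i) (S x)) (x : H) :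
    HasSum (fun i => (‖⟪g i, x⟫_ℂ‖ ^ 2 : ℂ)) ⟪x, S x⟫_ℂ := by
  have := aux_inner_hasSum g S hS x x
  convert this using 2 with i
  rw [← inner_conj_symm x (g i), RCLike.mul_conj]
  norm_cast

set_option maxHeartbeats 1000000 in
/-- For a Parseval frame `{f_i}` and `J ⊆ I`, with partial frame operators `S_J`, `S_{J^c}`:
`2(S_J + S_{J^c}²) ≥ (3/2)·I`, i.e. `⟨2(S_J + S_{J^c}²)x, x⟩ ≥ (3/2)‖x‖²` for all `x`. -/
theorem stmt_10 {H : Type*} [NormedAddCommGroup H] [InnerProductSpace ℂ H] [CompleteSpace H]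
    {ι : Type*} (f : ι → H)
    (hP : ∀ x : H, HasSum (fun i => ‖⟪f i, x⟫_ℂ‖ ^ 2) (‖x‖ ^ 2))
    (J : Set ι) (SJ SJc : H →L[ℂ] H)
    (hSJ : ∀ x : H, HasSum (fun i : J => ⟪f i, x⟫_ℂ • (f i : H)) (SJ x))
    (hSJc : ∀ x : H, HasSum (fun i : ↥Jᶜ => ⟪f i, x⟫_ℂ • (f i : H)) (SJc x)) :
    ∀ x : H, (3 / 2 : ℝ) * ‖x‖ ^ 2 ≤ RCLike.re ⟪((2 * (SJ + SJc ^ 2) : H →L[ℂ] H)) x, x⟫_ℂ := by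
  intro x
  -- real partial sums
  set a : ℝ := ∑' i : J, ‖⟪f i, x⟫_ℂ‖ ^ 2 with ha
  set b : ℝ := ∑' i : ↥Jᶜ, ‖⟪f i, x⟫_ℂ‖ ^ 2 with hb
  have hsJ : HasSum (fun i : J => ‖⟪f i, x⟫_ℂ‖ ^ 2) a :=
    ((hP x).summable.subtype J).hasSum
  have hsJc : HasSum (fun i : ↥Jᶜ => ‖⟪f i, x⟫_ℂ‖ ^ 2) b :=
    ((hP x).summable.subtype Jᶜ).hasSum
  have hab : a + b = ‖x‖ ^ 2 := by
    refine HasSum.unique (f := fun i => ‖⟪f i, x⟫_ℂ‖ ^ 2) ?_ (hP x)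
    exact HasSum.add_compl (f := fun i => ‖⟪f i, x⟫_ℂ‖ ^ 2) (s := J) hsJ hsJc
  have ha0 : 0 ≤ a := hsJ.nonneg (fun i => by positivity)
  have hb0 : 0 ≤ b := hsJc.nonneg (fun i => by positivity)
  -- identify inner products
  have hJ : ⟪x, SJ x⟫_ℂ = (a : ℂ) := by
    refine (aux_diag (fun i : J => f i) SJ hSJ x).unique ?_
    simpa using hsJ.mapL Complex.ofRealCLM
  have hJc : ⟪x, SJc x⟫_ℂ = (b : ℂ) := by
    refine (aux_diag (fun i : ↥Jᶜ => f i) SJc hSJc x).unique ?_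
    simpa using hsJc.mapL Complex.ofRealCLM
  -- the square term
  have hsq : ⟪x, SJc (SJc x)⟫_ℂ = ((‖SJc x‖ ^ 2 : ℝ) : ℂ) := by
    rw [aux_symm (fun i : ↥Jᶜ => f i) SJc hSJc x (SJc x), inner_self_eq_norm_sq_to_K]
    norm_num
  -- Cauchy–Schwarz
  have hcs : b ≤ ‖x‖ * ‖SJc x‖ := by
    have := re_inner_le_norm (𝕜 := ℂ) x (SJc x)
    rwa [hJc] at this
    
  -- expand the operator
  have hexp : ((2 * (SJ + SJc ^ 2) : H →L[ℂ] H)) x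
      = (SJ x + SJc (SJc x)) + (SJ x + SJc (SJc x)) := by
    have : ((2 : H →L[ℂ] H) = 1 + 1) := by norm_num
    simp [this, pow_two, ContinuousLinearMap.mul_apply, ContinuousLinearMap.add_apply]
  have hre : RCLike.re ⟪((2 * (SJ + SJc ^ 2) : H →L[ℂ] H)) x, x⟫_ℂ
      = 2 * a + 2 * ‖SJc x‖ ^ 2 := by
    rw [inner_re_symm, hexp, inner_add_right, inner_add_right, hJ, hsq]
    have h : ((a:ℂ) + ↑(‖SJc x‖ ^ 2) + ((a:ℂ) + ↑(‖SJc x‖ ^ 2)))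
        = ((2 * a + 2 * ‖SJc x‖ ^ 2 : ℝ) : ℂ) := by push_cast; ring
    rw [h]; exact Complex.ofReal_re _
  rw [hre]
  have hx0 : (0:ℝ) ≤ ‖x‖ := norm_nonneg x
  have hy0 : (0:ℝ) ≤ ‖SJc x‖ := norm_nonneg _
  nlinarith [sq_nonneg (‖SJc x‖ - ‖x‖ / 2)]
end

section
/- Let {f_i}_{i∈I} be a frame for a Hilbert space H and let λ > 0. Suppose {g_i}_{i∈K} and {h_i}_{i∈L} are families in H such that both {f_i}_{i∈I} ∪ {g_i}_{i∈K} and {f_i}_{i∈I} ∪ {h_i}_{i∈L} are λ-tight frames for H. Then closure(span{g_i : i∈K}) = closure(span{h_i : i∈L}). -/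
open scoped InnerProductSpace

lemma hasSum_inr_of_sum_elim {ι κ : Type*} {F : ι → ℝ} {G : κ → ℝ} {a b : ℝ}
    (hab : HasSum (Sum.elim F G) a) (hF : HasSum F b) :
    HasSum G (a - b) := by
  have hz : ∀ x ∉ Set.range (Sum.inl : ι → ι ⊕ κ), Sum.elim F (0 : κ → ℝ) x = 0 := by
    rintro (x | x) hx
    · exact absurd ⟨x, rfl⟩ hx
    · rfl
  have h1 : HasSum (Sum.elim F (0 : κ → ℝ)) b :=
    (Function.Injective.hasSum_iff Sum.inl_injective hz).1 (by simpa using hF)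
  have h2 : HasSum (fun j => Sum.elim F G j - Sum.elim F (0 : κ → ℝ) j) (a - b) :=
    hab.sub h1
  have hz2 : ∀ x ∉ Set.range (Sum.inr : κ → ι ⊕ κ),
      (fun j => Sum.elim F G j - Sum.elim F (0 : κ → ℝ) j) x = 0 := by
    rintro (x | x) hx
    · simp
    · exact absurd ⟨x, rfl⟩ hx
  have := (Function.Injective.hasSum_iff Sum.inr_injective hz2).2 h2
  have heq : ((fun j => Sum.elim F G j - Sum.elim F (0 : κ → ℝ) j) ∘ Sum.inr) = G := by
    funext k; simp
  rwa [heq] at this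

lemma mem_orth_span_range {H : Type*} [NormedAddCommGroup H] [InnerProductSpace ℂ H]
    {κ : Type*} {e : κ → H} {x : H} :
    x ∈ (Submodule.span ℂ (Set.range e))ᗮ ↔ ∀ k, ⟪e k, x⟫_ℂ = 0 := by
  constructor
  · intro hx k
    exact (Submodule.mem_orthogonal _ x).1 hx (e k) (Submodule.subset_span ⟨k, rfl⟩)
  · intro h0
    rw [Submodule.mem_orthogonal]
    intro u hu
    induction hu using Submodule.span_induction with
    | mem y hy => obtain ⟨k, rfl⟩ := hy; exact h0 k
    | zero => simp
    | add a b _ _ ha hb => simp [inner_add_left, ha, hb]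
    | smul c a _ ha => simp [inner_smul_left, ha]


lemma key_aux {H : Type*} [NormedAddCommGroup H] [InnerProductSpace ℂ H]
    {ι μ : Type*} (f : ι → H) (e : μ → H) (lam : ℝ) (x : H)
    (hsumf : Summable (fun i => ‖⟪f i, x⟫_ℂ‖ ^ 2))
    (hsum : HasSum (fun j : ι ⊕ μ => ‖⟪Sum.elim f e j, x⟫_ℂ‖ ^ 2) (lam * ‖x‖ ^ 2)) :
    (∀ k, ⟪e k, x⟫_ℂ = 0) ↔ lam * ‖x‖ ^ 2 - ∑' i, ‖⟪f i, x⟫_ℂ‖ ^ 2 = 0 := by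
  have hF : HasSum (fun i => ‖⟪f i, x⟫_ℂ‖ ^ 2) (∑' i, ‖⟪f i, x⟫_ℂ‖ ^ 2) := hsumf.hasSum
  have hE : HasSum (fun k => ‖⟪e k, x⟫_ℂ‖ ^ 2)
      (lam * ‖x‖ ^ 2 - ∑' i, ‖⟪f i, x⟫_ℂ‖ ^ 2) := by
    have heq : (fun j : ι ⊕ μ => ‖⟪Sum.elim f e j, x⟫_ℂ‖ ^ 2)
        = Sum.elim (fun i => ‖⟪f i, x⟫_ℂ‖ ^ 2) (fun k => ‖⟪e k, x⟫_ℂ‖ ^ 2) := by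
      funext j; cases j <;> rfl
    rw [heq] at hsum
    exact hasSum_inr_of_sum_elim hsum hF
  constructor
  · intro h0
    have : HasSum (fun k : μ => (0 : ℝ)) (lam * ‖x‖ ^ 2 - ∑' i, ‖⟪f i, x⟫_ℂ‖ ^ 2) := by
      convert hE using 1
      funext k; simp [h0 k]
    simpa using this.unique hasSum_zero
  · intro h0 k
    rw [h0] at hE
    have hle : ‖⟪e k, x⟫_ℂ‖ ^ 2 ≤ 0 := by
      have := le_hasSum hE k (fun j _ => by positivity)
      linarith
    have : ‖⟪e k, x⟫_ℂ‖ = 0 := by nlinarith [norm_nonneg (⟪e k, x⟫_ℂ), sq_nonneg ‖⟪e k, x⟫_ℂ‖]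
    simpa using this

/-- If a frame `{f_i}` is extended to λ-tight frames by `{g_k}` and by `{h_l}`, then
the closures of the spans of `{g_k}` and `{h_l}` coincide. -/
theorem stmt_14 {H : Type*} [NormedAddCommGroup H] [InnerProductSpace ℂ H] [CompleteSpace H]
    {ι κ L : Type*} (f : ι → H) (g : κ → H) (h : L → H) (lam : ℝ) (hlam : 0 < lam)
    (A B : ℝ) (hA : 0 < A) (hAB : A ≤ B)
    (hframe : ∀ x : H, Summable (fun i => ‖⟪f i, x⟫_ℂ‖ ^ 2) ∧
      A * ‖x‖ ^ 2 ≤ ∑' i, ‖⟪f i, x⟫_ℂ‖ ^ 2 ∧ ∑' i, ‖⟪f i, x⟫_ℂ‖ ^ 2 ≤ B * ‖x‖ ^ 2)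
    (hg : ∀ x : H, HasSum (fun j : ι ⊕ κ => ‖⟪Sum.elim f g j, x⟫_ℂ‖ ^ 2) (lam * ‖x‖ ^ 2))
    (hh : ∀ x : H, HasSum (fun j : ι ⊕ L => ‖⟪Sum.elim f h j, x⟫_ℂ‖ ^ 2) (lam * ‖x‖ ^ 2)) :
    (Submodule.span ℂ (Set.range g)).topologicalClosure =
      (Submodule.span ℂ (Set.range h)).topologicalClosure := by
  rw [← Submodule.orthogonal_orthogonal_eq_closure,
    ← Submodule.orthogonal_orthogonal_eq_closure]
  congr 1
  ext x
  rw [mem_orth_span_range, mem_orth_span_range]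
  exact (key_aux f g lam x (hframe x).1 (hg x)).trans (key_aux f h lam x (hframe x).1 (hh x)).symm
end
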